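/- Let H be a Hilbert space, ρ a positive trace-class operator, and T : B(H) → B(H) a bounded linear Schwarz map (i.e., T(x)*T(x) ≤ T(x*x) for all x) such that Tr(ρ T(a)) ≤ Tr(ρ a) for all positive a ∈ B(H). Then for every x ∈ B(H), ‖T(x) ρ^{1/2}‖₂ ≤ ‖x ρ^{1/2}‖₂; i.e., the map x ρ^{1/2} ↦ T(x) ρ^{1/2} is a contraction on the subspace {x ρ^{1/2} : x ∈ B(H)} of S₂(H). -/

import Mathlib

/-!
With `s = ρ^{1/2}`, cyclicity of the trace on Hilbert–Schmidt operators gives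
`Tr(ρ y) = Tr(s y s) = ∑ ⟪s eᵢ, y (s eᵢ)⟫` for every bounded `y`, and for `y = a* a` this is
`‖a s‖₂²`. Since `y ↦ Tr(s y s)` is monotone, the Schwarz inequality and subinvariance give
`‖T(x) s‖₂² = Tr(ρ T(x)* T(x)) ≤ Tr(ρ T(x* x)) ≤ Tr(ρ x* x) = ‖x s‖₂²`.
-/

open scoped InnerProductSpace ComplexOrder

namespace HilbertBasis

variable {ι 𝕜 E : Type*} [RCLike 𝕜] [NormedAddCommGroup E] [InnerProductSpace 𝕜 E]

theorem hasSum_norm_inner_sq (b : HilbertBasis ι 𝕜 E) (v : E) :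
    HasSum (fun i => ‖⟪b i, v⟫_𝕜‖ ^ 2) (‖v‖ ^ 2) := by
  have h := lp.hasSum_norm (p := 2) (by norm_num) (b.repr v)
  simp only [ENNReal.toReal_ofNat, Real.rpow_two, b.repr_apply_apply,
    LinearIsometryEquiv.norm_map] at h
  exact h

def IsHilbertSchmidt (b : HilbertBasis ι 𝕜 E) (u : E →L[𝕜] E) : Prop :=
  Summable fun i => ‖u (b i)‖ ^ 2

variable {b : HilbertBasis ι 𝕜 E} {u v : E →L[𝕜] E}

namespace IsHilbertSchmidt

theorem summable_norm_inner_sq (hu : b.IsHilbertSchmidt u) :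
    Summable fun p : ι × ι => ‖⟪b p.2, u (b p.1)⟫_𝕜‖ ^ 2 := by
  refine (summable_prod_of_nonneg fun p => by positivity).2
    ⟨fun i => (b.hasSum_norm_inner_sq (u (b i))).summable, ?_⟩
  exact hu.congr fun i => (b.hasSum_norm_inner_sq (u (b i))).tsum_eq.symm

theorem mul_left (hu : b.IsHilbertSchmidt u) (a : E →L[𝕜] E) : b.IsHilbertSchmidt (a * u) := by
  refine .of_nonneg_of_le (fun _ => by positivity) (fun i => ?_) (Summable.mul_left (‖a‖ ^ 2) hu)
  rw [mul_apply_eq_comp, ← mul_pow]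
  gcongr
  exact a.le_opNorm _

theorem summable_inner_apply_map_apply (hu : b.IsHilbertSchmidt u) (y : E →L[𝕜] E) :
    Summable fun i => ⟪u (b i), y (u (b i))⟫_𝕜 := by
  refine .of_norm_bounded (Summable.mul_left ‖y‖ hu) fun i => ?_
  calc ‖⟪u (b i), y (u (b i))⟫_𝕜‖ ≤ ‖u (b i)‖ * (‖y‖ * ‖u (b i)‖) :=
        (norm_inner_le_norm _ _).trans (by gcongr; exact y.le_opNorm _)
    _ = ‖y‖ * ‖u (b i)‖ ^ 2 := by ring

variable [CompleteSpace E]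

theorem star (hu : b.IsHilbertSchmidt u) : b.IsHilbertSchmidt (Star.star u) := by
  have hswap : Summable fun p : ι × ι => ‖⟪b p.2, (Star.star u) (b p.1)⟫_𝕜‖ ^ 2 := by
    refine ((Equiv.prodComm ι ι).summable_iff.2 hu.summable_norm_inner_sq).congr fun p => ?_
    simp [ContinuousLinearMap.star_eq_adjoint, ContinuousLinearMap.adjoint_inner_right,
      norm_inner_symm]
  exact ((summable_prod_of_nonneg fun _ => by positivity).1 hswap).2.congr
    fun i => (b.hasSum_norm_inner_sq (Star.star u (b i))).tsum_eq

theorem mul_right (hu : b.IsHilbertSchmidt u) (y : E →L[𝕜] E) :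
    b.IsHilbertSchmidt (u * y) := by
  simpa using (hu.star.mul_left (Star.star y)).star

end IsHilbertSchmidt

variable [CompleteSpace E]

theorem hasSum_inner_apply_mul_inner_apply (b : HilbertBasis ι 𝕜 E) (u v : E →L[𝕜] E) (i : ι) :
    HasSum (fun j => ⟪b i, u (b j)⟫_𝕜 * ⟪b j, v (b i)⟫_𝕜) ⟪b i, (u * v) (b i)⟫_𝕜 := by
  simpa [ContinuousLinearMap.adjoint_inner_left] using
    b.hasSum_inner_mul_inner (ContinuousLinearMap.adjoint u (b i)) (v (b i))

/-- The double series of matrix entries is dominated by `(|uᵢⱼ|² + |vⱼᵢ|²) / 2`, so Fubini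
applies. -/
theorem IsHilbertSchmidt.tsum_inner_mul_comm (hu : b.IsHilbertSchmidt u)
    (hv : b.IsHilbertSchmidt v) :
    ∑' i, ⟪b i, (u * v) (b i)⟫_𝕜 = ∑' i, ⟪b i, (v * u) (b i)⟫_𝕜 := by
  set F : ι → ι → 𝕜 := fun i j => ⟪b i, u (b j)⟫_𝕜 * ⟪b j, v (b i)⟫_𝕜
  have hF : Summable (Function.uncurry F) := by
    refine .of_norm_bounded (((Equiv.prodComm ι ι).summable_iff.2
      hu.summable_norm_inner_sq).add hv.summable_norm_inner_sq) fun p => ?_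
    simp only [F, Function.uncurry, norm_mul, Function.comp_apply, Equiv.prodComm_apply,
      Prod.fst_swap, Prod.snd_swap]
    nlinarith [two_mul_le_add_sq ‖⟪b p.1, u (b p.2)⟫_𝕜‖ ‖⟪b p.2, v (b p.1)⟫_𝕜‖,
      norm_nonneg ⟪b p.1, u (b p.2)⟫_𝕜, norm_nonneg ⟪b p.2, v (b p.1)⟫_𝕜]
  calc ∑' i, ⟪b i, (u * v) (b i)⟫_𝕜 = ∑' i, ∑' j, F i j :=
        tsum_congr fun i => (b.hasSum_inner_apply_mul_inner_apply u v i).tsum_eq.symm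
    _ = ∑' j, ∑' i, F i j := hF.tsum_comm.symm
    _ = ∑' j, ⟪b j, (v * u) (b j)⟫_𝕜 := tsum_congr fun j => by
        simpa only [F, mul_comm] using (b.hasSum_inner_apply_mul_inner_apply v u j).tsum_eq

theorem isHilbertSchmidt_of_summable_inner_mul_self {s : E →L[𝕜] E} (hs : IsSelfAdjoint s)
    (h : Summable fun i => ⟪b i, (s * s) (b i)⟫_𝕜) : b.IsHilbertSchmidt s := by
  refine (RCLike.hasSum_re 𝕜 h.hasSum).summable.congr fun i => ?_
  have hsym : ⟪s (b i), s (b i)⟫_𝕜 = ⟪b i, s (s (b i))⟫_𝕜 := hs.isSymmetric _ _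
  rw [mul_apply_eq_comp, ← hsym, inner_self_eq_norm_sq_to_K]
  norm_cast

theorem IsHilbertSchmidt.tsum_inner_mul_self_mul_apply {s : E →L[𝕜] E}
    (hs : b.IsHilbertSchmidt s) (hsa : IsSelfAdjoint s) (y : E →L[𝕜] E) :
    ∑' i, ⟪b i, (s * s * y) (b i)⟫_𝕜 = ∑' i, ⟪s (b i), y (s (b i))⟫_𝕜 := by
  rw [mul_assoc, hs.tsum_inner_mul_comm (hs.mul_right y)]
  exact tsum_congr fun i => (hsa.isSymmetric _ _).symm

end HilbertBasis

namespace ContinuousLinearMap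

variable {𝕜 E : Type*} [RCLike 𝕜] [NormedAddCommGroup E] [InnerProductSpace 𝕜 E]

theorem inner_apply_le_inner_apply_of_le {c d : E →L[𝕜] E} (h : c ≤ d) (v : E) :
    ⟪v, c v⟫_𝕜 ≤ ⟪v, d v⟫_𝕜 := by
  simpa [inner_sub_right] using ((le_def c d).1 h).inner_nonneg_right v

theorem inner_star_mul_self_apply [CompleteSpace E] (a : E →L[𝕜] E) (v : E) :
    ⟪v, (star a * a) v⟫_𝕜 = (‖a v‖ ^ 2 : ℝ) := by
  rw [mul_apply_eq_comp, star_eq_adjoint, adjoint_inner_right, inner_self_eq_norm_sq_to_K]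
  norm_cast

end ContinuousLinearMap

theorem schwarz_contraction_on_S2_general
    {ι H : Type*} [NormedAddCommGroup H] [InnerProductSpace ℂ H] [CompleteSpace H]
    (b : HilbertBasis ι ℂ H) (ρ : H →L[ℂ] H) (hρpos : 0 ≤ ρ)
    (htc : Summable fun i => ⟪b i, ρ (b i)⟫_ℂ)
    (T : (H →L[ℂ] H) →L[ℂ] (H →L[ℂ] H))
    (hSchwarz : ∀ x : H →L[ℂ] H, star (T x) * T x ≤ T (star x * x))
    (hsub : ∀ a : H →L[ℂ] H, 0 ≤ a →
      (∑' i, ⟪b i, (ρ * T a) (b i)⟫_ℂ) ≤ ∑' i, ⟪b i, (ρ * a) (b i)⟫_ℂ)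
    (x : H →L[ℂ] H) :
    (Summable fun i => ‖(T x * CFC.sqrt ρ) (b i)‖ ^ 2)
      ∧ (Summable fun i => ‖(x * CFC.sqrt ρ) (b i)‖ ^ 2)
      ∧ Real.sqrt (∑' i, ‖(T x * CFC.sqrt ρ) (b i)‖ ^ 2)
          ≤ Real.sqrt (∑' i, ‖(x * CFC.sqrt ρ) (b i)‖ ^ 2) := by
  set s := CFC.sqrt ρ
  have hρ : s * s = ρ := CFC.sqrt_mul_sqrt_self ρ hρpos
  have hsa : IsSelfAdjoint s := .of_nonneg (CFC.sqrt_nonneg ρ)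
  have hs : b.IsHilbertSchmidt s :=
    HilbertBasis.isHilbertSchmidt_of_summable_inner_mul_self hsa (hρ ▸ htc)
  have hnorm (a : H →L[ℂ] H) :
      ∑' i, ⟪s (b i), (star a * a) (s (b i))⟫_ℂ = ((∑' i, ‖(a * s) (b i)‖ ^ 2 : ℝ) : ℂ) := by
    rw [Complex.ofReal_tsum]
    exact tsum_congr fun i => ContinuousLinearMap.inner_star_mul_self_apply a (s (b i))
  refine ⟨hs.mul_left (T x), hs.mul_left x, Real.sqrt_le_sqrt ?_⟩
  suffices h : ((∑' i, ‖(T x * s) (b i)‖ ^ 2 : ℝ) : ℂ) ≤ ((∑' i, ‖(x * s) (b i)‖ ^ 2 : ℝ) : ℂ) by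
    exact_mod_cast h
  calc ((∑' i, ‖(T x * s) (b i)‖ ^ 2 : ℝ) : ℂ)
      = ∑' i, ⟪s (b i), (star (T x) * T x) (s (b i))⟫_ℂ := (hnorm (T x)).symm
    _ ≤ ∑' i, ⟪s (b i), T (star x * x) (s (b i))⟫_ℂ :=
        Summable.tsum_le_tsum
          (fun i => ContinuousLinearMap.inner_apply_le_inner_apply_of_le (hSchwarz x) _)
          (hs.summable_inner_apply_map_apply _) (hs.summable_inner_apply_map_apply _)
    _ = ∑' i, ⟪b i, (ρ * T (star x * x)) (b i)⟫_ℂ := by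
        rw [← hρ, hs.tsum_inner_mul_self_mul_apply hsa]
    _ ≤ ∑' i, ⟪b i, (ρ * (star x * x)) (b i)⟫_ℂ := hsub _ (star_mul_self_nonneg x)
    _ = ((∑' i, ‖(x * s) (b i)‖ ^ 2 : ℝ) : ℂ) := by
        rw [← hρ, hs.tsum_inner_mul_self_mul_apply hsa, hnorm]

/-- Let `H` be a Hilbert space, `ρ` a positive trace-class operator, and
`T : B(H) → B(H)` a bounded linear Schwarz map (`T(x)* T(x) ≤ T(x* x)`) such that
`Tr(ρ T(a)) ≤ Tr(ρ a)` for all positive `a`.  Then for every `x ∈ B(H)`,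
`‖T(x) ρ^{1/2}‖₂ ≤ ‖x ρ^{1/2}‖₂`, i.e. `x ρ^{1/2} ↦ T(x) ρ^{1/2}` is a contraction
on the subspace `{x ρ^{1/2} : x ∈ B(H)}` of `S₂(H)`.  Traces and Hilbert-Schmidt
norms are computed with respect to a Hilbert basis `b`. -/
theorem schwarz_contraction_on_S2
    {ι H : Type*} [NormedAddCommGroup H] [InnerProductSpace ℂ H] [CompleteSpace H]
    (b : HilbertBasis ι ℂ H) (ρ : H →L[ℂ] H) (hρpos : 0 ≤ ρ)
    (htc : Summable fun i => ⟪b i, ρ (b i)⟫_ℂ)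
    (T : (H →L[ℂ] H) →L[ℂ] (H →L[ℂ] H))
    (hSchwarz : ∀ x : H →L[ℂ] H, star (T x) * T x ≤ T (star x * x))
    (htsum : ∀ x : H →L[ℂ] H, Summable fun i => ⟪b i, (ρ * x) (b i)⟫_ℂ)
    (hsub : ∀ a : H →L[ℂ] H, 0 ≤ a →
      (∑' i, ⟪b i, (ρ * T a) (b i)⟫_ℂ) ≤ ∑' i, ⟪b i, (ρ * a) (b i)⟫_ℂ)
    (x : H →L[ℂ] H) :
    (Summable fun i => ‖(T x * CFC.sqrt ρ) (b i)‖ ^ 2)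
      ∧ (Summable fun i => ‖(x * CFC.sqrt ρ) (b i)‖ ^ 2)
      ∧ Real.sqrt (∑' i, ‖(T x * CFC.sqrt ρ) (b i)‖ ^ 2)
          ≤ Real.sqrt (∑' i, ‖(x * CFC.sqrt ρ) (b i)‖ ^ 2) :=
  schwarz_contraction_on_S2_general b ρ hρpos htc T hSchwarz hsub x
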